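/- arXiv:2507.20495 — 2 statements merged into one kernel-verified Lean document; each statement's English description precedes it below -/
import Mathlib

section
/- The generating function of the level-set statistic satisfies: sum over π ∈ PF(m,n) of x^{slev(π)} = (n-m+1) x ((n-m+1)x + m)^{m-1}. -/
/-!
Write `n = m + t`. Given the set `A` of cars preferring one of the first `t + 1` spots, those
cars may prefer any of these spots, and the parking condition on the remaining cars says exactly
that their preferences, shifted down by `t + 1`, form a parking function of `m - |A|` cars on
`m - 1` spots. So the generating function is `∑ₖ C(m,k) ((t+1)x)^k N(m-k, m-1)`, where
`N(m-k, m-1)` is `0` for `k = 0`, `1` for `k = m`, and, by induction on `m` (at `x = 1`),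
`k m^(m-k-1)` otherwise. As `C(m,k) k = m C(m-1,k-1)`, this sum is the binomial expansion of
`(t+1)x ((t+1)x + m)^(m-1)`.
-/

/-- The finite set of parking functions `PF(m,n)`, encoded as functions
`Fin m → Fin n`, where the preferred spot of car `k` is `(π k : ℕ) + 1 ∈ {1,…,n}`. -/
def pf (m n : ℕ) : Finset (Fin m → Fin n) :=
  Finset.univ.filter (fun π =>
    ∀ i, i ≤ n → m + i ≤ (Finset.univ.filter (fun k => (π k : ℕ) + 1 ≤ i)).card + n)

open Finset

section Parking

variable {ι κ : Type*} [Fintype ι] [Fintype κ]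

/-- Preferences are `0`-indexed: `f k < i` says that car `k` prefers one of the first `i` spots. -/
def IsParking (n : ℕ) (f : ι → ℕ) : Prop :=
  ∀ i ≤ n, Fintype.card ι + i ≤ #{k | f k < i} + n

instance (n : ℕ) : DecidablePred (IsParking (ι := ι) n) := fun _ => by
  unfold IsParking; infer_instance

lemma isParking_comp_equiv (e : κ ≃ ι) {n : ℕ} {f : ι → ℕ} :
    IsParking n (f ∘ e) ↔ IsParking n f := by
  have hcount (i : ℕ) : #{k | f (e k) < i} = #{k | f k < i} :=
    card_equiv e (by simp)
  simp only [IsParking, Function.comp_apply, hcount, Fintype.card_congr e]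

variable [DecidableEq ι] [DecidableEq κ]

variable (ι) in
def parkingFunctions (n : ℕ) : Finset (ι → Fin n) :=
  univ.filter fun π => IsParking n (fun k => (π k : ℕ))

lemma pf_eq_parkingFunctions (m n : ℕ) : pf m n = parkingFunctions (Fin m) n := by
  ext π
  simp only [pf, parkingFunctions, IsParking, mem_filter, mem_univ, true_and, Fintype.card_fin]
  rfl

lemma card_parkingFunctions_congr (e : ι ≃ κ) (n : ℕ) :
    #(parkingFunctions ι n) = #(parkingFunctions κ n) :=
  card_equiv (e.arrowCongr (Equiv.refl _)) fun π => by
    simp [parkingFunctions, ← isParking_comp_equiv e.symm, Function.comp_def]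

lemma card_parkingFunctions_eq_card_pf (n : ℕ) :
    #(parkingFunctions ι n) = #(pf (Fintype.card ι) n) := by
  rw [pf_eq_parkingFunctions]
  exact card_parkingFunctions_congr (Fintype.equivFin ι) n

lemma card_filter_lt_add_eq {f : ι → ℕ} {t : ℕ} {A : Finset ι} (hA : ∀ i, f i ≤ t ↔ i ∈ A)
    (j : ℕ) :
    #{i | f i < t + 1 + j} = #A + #{u : {i // i ∉ A} | f u - (t + 1) < j} := by
  have hlow : ({i | f i < t + 1 + j} : Finset ι).filter (· ∈ A) = A := by
    ext i
    simp only [mem_filter, mem_univ, true_and, and_iff_right_iff_imp]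
    intro hi
    have := (hA i).2 hi
    omega
  have hhigh : ({i | f i < t + 1 + j} : Finset ι).subtype (· ∉ A)
      = (univ.filter fun u : {i // i ∉ A} => f u - (t + 1) < j) := by
    ext u
    have := (hA u).not.2 u.2
    simp only [mem_filter, mem_univ, true_and, mem_subtype]
    omega
  rw [← card_filter_add_card_filter_not (· ∈ A), hlow, ← card_subtype, hhigh]

lemma isParking_add_iff {f : ι → ℕ} {t : ℕ} {A : Finset ι} (hA : ∀ i, f i ≤ t ↔ i ∈ A) :
    IsParking (Fintype.card ι + t) f ↔
      IsParking (Fintype.card ι - 1) (fun u : {i // i ∉ A} => f u - (t + 1)) := by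
  have hAcard : #A ≤ Fintype.card ι := card_le_univ A
  have hcompl : Fintype.card {i // i ∉ A} = Fintype.card ι - #A := by
    simp [Fintype.card_subtype_compl]
  simp only [IsParking, hcompl]
  constructor
  · intro h j hj
    rcases Nat.eq_zero_or_pos (Fintype.card ι) with h0 | hpos
    · omega
    · have := h (t + 1 + j) (by omega)
      rw [card_filter_lt_add_eq hA] at this
      omega
  · intro h i hi
    obtain hit | ⟨j, rfl⟩ : i ≤ t ∨ ∃ j, i = t + 1 + j :=
      (le_or_gt i t).imp_right fun hlt => ⟨i - (t + 1), by omega⟩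
    · omega
    · have := h j (by omega)
      rw [card_filter_lt_add_eq hA]
      omega

section JoinLevel

variable (t : ℕ) {A : Finset ι}

def joinLevel (p : (A → Fin (t + 1)) × ({i // i ∉ A} → Fin (Fintype.card ι - 1))) (i : ι) :
    Fin (Fintype.card ι + t) :=
  have : 0 < Fintype.card ι := Fintype.card_pos_iff.2 ⟨i⟩
  if h : i ∈ A then ⟨p.1 ⟨i, h⟩, by have := (p.1 ⟨i, h⟩).isLt; omega⟩
  else ⟨t + 1 + p.2 ⟨i, h⟩, by have := (p.2 ⟨i, h⟩).isLt; omega⟩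

variable {t} (p : (A → Fin (t + 1)) × ({i // i ∉ A} → Fin (Fintype.card ι - 1)))

lemma joinLevel_val_of_mem (a : A) : (joinLevel t p a : ℕ) = p.1 a := by
  simp [joinLevel]

lemma joinLevel_val_of_notMem (u : {i // i ∉ A}) : (joinLevel t p u : ℕ) = t + 1 + p.2 u := by
  simp [joinLevel, u.2]

lemma joinLevel_le_iff (i : ι) : (joinLevel t p i : ℕ) ≤ t ↔ i ∈ A := by
  by_cases h : i ∈ A
  · simp only [joinLevel_val_of_mem p ⟨i, h⟩, h, iff_true]
    exact Nat.le_of_lt_succ (p.1 ⟨i, h⟩).isLt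
  · simp only [joinLevel_val_of_notMem p ⟨i, h⟩, h, iff_false]
    omega

end JoinLevel

lemma card_filter_level_eq (t : ℕ) (A : Finset ι) :
    #{π ∈ parkingFunctions ι (Fintype.card ι + t) | univ.filter (fun i => (π i : ℕ) ≤ t) = A}
      = (t + 1) ^ #A * #(parkingFunctions {i // i ∉ A} (Fintype.card ι - 1)) := by
  have hprod : (t + 1) ^ #A * #(parkingFunctions {i // i ∉ A} (Fintype.card ι - 1))
      = #((univ : Finset (A → Fin (t + 1))) ×ˢ
          parkingFunctions {i // i ∉ A} (Fintype.card ι - 1)) := by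
    simp [card_product]
  rw [hprod]
  symm
  apply card_bij (fun p _ => joinLevel t p)
  · intro p hp
    simp only [mem_product, mem_univ, true_and, parkingFunctions, mem_filter] at hp ⊢
    refine ⟨(isParking_add_iff (joinLevel_le_iff p)).2 ?_, ?_⟩
    · simpa only [joinLevel_val_of_notMem, Nat.add_sub_cancel_left] using hp
    · ext i
      simp [joinLevel_le_iff]
  · intro p _ q _ h
    have hval (i : ι) : (joinLevel t p i : ℕ) = joinLevel t q i := by rw [h]
    refine Prod.ext (funext fun a => Fin.ext ?_) (funext fun u => Fin.ext ?_)
    · simpa only [joinLevel_val_of_mem] using hval a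
    · simpa only [joinLevel_val_of_notMem, Nat.add_left_cancel_iff] using hval u
  · intro π hπ
    simp only [parkingFunctions, mem_filter, mem_univ, true_and] at hπ
    obtain ⟨hpark, hlevel⟩ := hπ
    have hA (i : ι) : (π i : ℕ) ≤ t ↔ i ∈ A := by simp [← hlevel]
    have hhigh (u : {i // i ∉ A}) : (π u : ℕ) - (t + 1) < Fintype.card ι - 1 := by
      have := (hA u).not.2 u.2
      have := (π u).isLt
      omega
    refine ⟨(fun a => ⟨π a, Nat.lt_succ_of_le ((hA a).2 a.2)⟩, fun u => ⟨π u - (t + 1), hhigh u⟩),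
      ?_, ?_⟩
    · simpa [parkingFunctions] using (isParking_add_iff hA).1 hpark
    · funext i
      apply Fin.ext
      by_cases h : i ∈ A
      · exact joinLevel_val_of_mem _ ⟨i, h⟩
      · rw [joinLevel_val_of_notMem _ ⟨i, h⟩]
        have := (hA i).not.2 h
        dsimp only
        omega

end Parking

lemma sum_pf_pow_card_le_eq_sum_choose {R : Type*} [CommSemiring R] (m t : ℕ) (x : R) :
    ∑ π ∈ pf m (m + t), x ^ #(univ.filter fun i => (π i : ℕ) ≤ t)
      = ∑ k ∈ range (m + 1), m.choose k * ((t + 1) * x) ^ k * #(pf (m - k) (m - 1)) := by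
  have hfibre (A : Finset (Fin m)) :
      #{π ∈ pf m (m + t) | univ.filter (fun i => (π i : ℕ) ≤ t) = A}
        = (t + 1) ^ #A * #(pf (m - #A) (m - 1)) := by
    have h := card_filter_level_eq (ι := Fin m) t A
    rw [Fintype.card_fin] at h
    rw [pf_eq_parkingFunctions, h, card_parkingFunctions_eq_card_pf, Fintype.card_subtype_compl,
      Fintype.card_coe, Fintype.card_fin]
  rw [← sum_fiberwise _ (fun π => univ.filter fun i => (π i : ℕ) ≤ t)]
  calc ∑ A : Finset (Fin m), ∑ π ∈ pf m (m + t) with univ.filter (fun i => (π i : ℕ) ≤ t) = A,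
        x ^ #(univ.filter fun i => (π i : ℕ) ≤ t)
      = ∑ A ∈ (univ : Finset (Fin m)).powerset, ((t + 1) * x) ^ #A * #(pf (m - #A) (m - 1)) := by
        rw [powerset_univ]
        refine sum_congr rfl fun A _ => ?_
        rw [sum_congr rfl fun π hπ => by rw [(mem_filter.1 hπ).2], sum_const, hfibre,
          nsmul_eq_mul, mul_pow]
        push_cast
        ring
    _ = _ := by
        rw [sum_powerset_apply_card (fun k => ((t + 1) * x) ^ k * #(pf (m - k) (m - 1)))]
        simp [mul_assoc]

lemma pf_sub_one_eq_empty {m : ℕ} (hm : 1 ≤ m) : pf m (m - 1) = ∅ := by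
  refine eq_empty_of_forall_notMem fun π hπ => ?_
  have := (mem_filter.1 hπ).2 0 (Nat.zero_le _)
  simp only [add_zero, nonpos_iff_eq_zero, Nat.add_eq_zero_iff, one_ne_zero, and_false,
    filter_false, card_empty, zero_add] at this
  omega

lemma card_pf_zero (n : ℕ) : #(pf 0 n) = 1 := by
  rw [pf, filter_true_of_mem fun π _ i hi => by omega]
  rfl

lemma sum_choose_mul_pow_mul_eq {R : Type*} [CommSemiring R] {m : ℕ} (hm : 1 ≤ m) (y : R)
    (ν : ℕ → R) (h0 : ν 0 = 0)
    (hν : ∀ k, 1 ≤ k → k ≤ m → m.choose k * ν k = (m - 1).choose (k - 1) * m ^ (m - k)) :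
    ∑ k ∈ range (m + 1), m.choose k * y ^ k * ν k = y * (y + m) ^ (m - 1) := by
  obtain ⟨s, rfl⟩ : ∃ s, m = s + 1 := ⟨m - 1, by omega⟩
  rw [sum_range_succ', h0, mul_zero, add_zero, add_pow, mul_sum]
  refine sum_congr rfl fun j hj => ?_
  have hjs : j ≤ s := Nat.lt_succ_iff.1 (mem_range.1 hj)
  calc ((s + 1).choose (j + 1) : R) * y ^ (j + 1) * ν (j + 1)
      = ((s + 1).choose (j + 1) * ν (j + 1)) * y ^ (j + 1) := by ring
    _ = _ := by
        rw [hν (j + 1) (by omega) (by omega)]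
        simp only [Nat.add_sub_cancel, Nat.add_sub_add_right, Nat.cast_add, Nat.cast_one]
        ring

lemma choose_mul_mul_pow {m k : ℕ} (hk : 1 ≤ k) (hkm : k < m) :
    m.choose k * (k * m ^ (m - k - 1)) = (m - 1).choose (k - 1) * m ^ (m - k) := by
  obtain ⟨s, rfl⟩ : ∃ s, m = s + 1 := ⟨m - 1, by omega⟩
  obtain ⟨j, rfl⟩ : ∃ j, k = j + 1 := ⟨k - 1, by omega⟩
  rw [show s + 1 - (j + 1) - 1 = s - j - 1 by omega, show s + 1 - (j + 1) = s - j - 1 + 1 by omega,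
    Nat.add_sub_cancel, Nat.add_sub_cancel, pow_succ]
  calc (s + 1).choose (j + 1) * ((j + 1) * (s + 1) ^ (s - j - 1))
      = (s + 1).choose (j + 1) * (j + 1) * (s + 1) ^ (s - j - 1) := by ring
    _ = _ := by rw [← Nat.add_one_mul_choose_eq]; ring

theorem sum_pf_pow_card_le {R : Type*} [CommSemiring R] (m t : ℕ) (hm : 1 ≤ m) (x : R) :
    ∑ π ∈ pf m (m + t), x ^ #(univ.filter fun i => (π i : ℕ) ≤ t)
      = (t + 1) * x * ((t + 1) * x + m) ^ (m - 1) := by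
  induction m using Nat.strong_induction_on generalizing t x with
  | _ m ih =>
  rw [sum_pf_pow_card_le_eq_sum_choose]
  refine sum_choose_mul_pow_mul_eq hm _ _ (by simp [pf_sub_one_eq_empty hm]) fun k hk hkm => ?_
  rcases hkm.eq_or_lt with rfl | hlt
  · rw [Nat.sub_self, card_pf_zero]
    simp
  · have hcount := ih (m - k) (by omega) (k - 1) (by omega) (1 : R)
    rw [show m - k + (k - 1) = m - 1 by omega] at hcount
    simp only [one_pow, sum_const, nsmul_eq_mul, mul_one] at hcount
    have hk' : ((k - 1 : ℕ) : R) + 1 = k := by rw [← Nat.cast_add_one, Nat.sub_add_cancel hk]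
    have hm' : (k : R) + ((m - k : ℕ) : R) = m := by
      rw [← Nat.cast_add, Nat.add_sub_cancel' hlt.le]
    rw [hcount, hk', hm']
    exact_mod_cast congrArg (Nat.cast (R := R)) (choose_mul_mul_pow hk hlt)

theorem gf_slev (m n : ℕ) (hm : 1 ≤ m) (hmn : m ≤ n) (x : ℚ) :
    ∑ π ∈ pf m n, x ^ (Finset.univ.filter (fun i => (π i : ℕ) + 1 ≤ n - m + 1)).card =
      ((n : ℚ) - m + 1) * x * (((n : ℚ) - m + 1) * x + m) ^ (m - 1) := by
  obtain ⟨t, rfl⟩ := Nat.exists_eq_add_of_le hmn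
  have hlevel (π : Fin m → Fin (m + t)) :
      univ.filter (fun i => (π i : ℕ) + 1 ≤ m + t - m + 1)
        = univ.filter (fun i => (π i : ℕ) ≤ t) := by
    simp
  simp only [hlevel, sum_pf_pow_card_le m t hm x]
  push_cast
  ring
end

section
/- Under componentwise addition modulo n+1 on [n+1]^m (with m ≤ n), every coset of the cyclic subgroup generated by (1,1,...,1) contains exactly n-m+1 parking functions of PF(m,n). That is, for every π ∈ [n+1]^m, exactly n-m+1 of the n+1 translates π + k·(1,...,1) mod (n+1) (representatives taken in {1,...,n+1}) lie in PF(m,n). -/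
/-- `π : [m] → [n]` is a parking function in `PF(m,n)`. -/
def IsPF (m n : ℕ) (π : Fin m → ℕ) : Prop :=
  (∀ k, 1 ≤ π k ∧ π k ≤ n) ∧
  ∀ i, i ≤ n → m + i ≤ (Finset.univ.filter (fun k => π k ≤ i)).card + n

/-!
Pollak's circle argument, in the form of the cycle lemma. Reading the preferences cyclically, let
`parkingWalk π t` be the number of cars preferring one of the spots `0, …, t - 1` (mod `n + 1`),
minus `t`. It descends by at most one per step and drops by `n + 1 - m` per period. The translate
by `k` parks exactly when the walk started at `s = -k` stays strictly above its value one period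
later, i.e. when `s + (n + 1)` is a strict record minimum of the walk. Strict records of such a
walk are counted by the drop of its running minimum, which over a period is `n + 1 - m`.
-/

open Finset Fin.NatCast

section StrictRecord

variable (S : ℕ → ℤ)

def IsStrictRecord (t : ℕ) : Prop := ∀ j < t, S t < S j

def prefixMin (b : ℕ) : ℤ := (range (b + 1)).inf' nonempty_range_add_one S

variable {S}

lemma prefixMin_le {b j : ℕ} (hj : j ≤ b) : prefixMin S b ≤ S j :=
  inf'_le S (mem_range.mpr (Nat.lt_succ_of_le hj))

lemma exists_eq_prefixMin (b : ℕ) : ∃ j ≤ b, S j = prefixMin S b := by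
  obtain ⟨j, hj, hmin⟩ := exists_mem_eq_inf' (nonempty_range_add_one (n := b)) S
  exact ⟨j, Nat.lt_succ_iff.mp (mem_range.mp hj), hmin.symm⟩

lemma prefixMin_succ (b : ℕ) : prefixMin S (b + 1) = min (S (b + 1)) (prefixMin S b) := by
  simp_rw [prefixMin, range_add_one (n := b + 1)]
  exact inf'_insert _ _

lemma isStrictRecord_succ_iff (b : ℕ) :
    IsStrictRecord S (b + 1) ↔ S (b + 1) < prefixMin S b := by
  refine ⟨fun h => ?_, fun h j hj => h.trans_le (prefixMin_le (Nat.lt_succ_iff.mp hj))⟩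
  obtain ⟨j, hj, hmin⟩ := exists_eq_prefixMin (S := S) b
  exact hmin ▸ h j (Nat.lt_succ_of_le hj)

/-- A walk that descends by at most one per step sets a new strict record exactly when its
running minimum drops, and then by exactly one. -/
lemma card_filter_isStrictRecord_Ioc [DecidablePred (IsStrictRecord S)]
    (hstep : ∀ t, S t - 1 ≤ S (t + 1)) {a b : ℕ} (hab : a ≤ b) :
    (#((Ioc a b).filter (IsStrictRecord S)) : ℤ) = prefixMin S a - prefixMin S b := by
  induction b, hab using Nat.le_induction with
  | base => simp
  | succ b hab ih =>
    rw [← insert_Ioc_right_eq_Ioc_add_one hab, filter_insert, prefixMin_succ]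
    have hmin := prefixMin_le (S := S) (le_refl b)
    by_cases hrec : IsStrictRecord S (b + 1)
    · have hlt := (isStrictRecord_succ_iff b).mp hrec
      rw [if_pos hrec, card_insert_of_notMem (by simp), min_eq_left hlt.le]
      have hdesc := hstep b
      push_cast
      omega
    · rw [if_neg hrec, min_eq_right (not_lt.mp ((isStrictRecord_succ_iff b).not.mp hrec)), ih]

variable {p : ℕ} {d : ℤ}

lemma prefixMin_add_period (hper : ∀ t, S (t + p) = S t - d) (hd : 0 ≤ d) {b : ℕ}
    (hb : p ≤ b + 1) : prefixMin S (b + p) = prefixMin S b - d := by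
  apply le_antisymm
  · obtain ⟨j, hj, hmin⟩ := exists_eq_prefixMin (S := S) b
    calc prefixMin S (b + p) ≤ S (j + p) := prefixMin_le (by omega)
      _ = prefixMin S b - d := by rw [hper, hmin]
  · obtain ⟨j, hj, hmin⟩ := exists_eq_prefixMin (S := S) (b + p)
    rw [← hmin]
    rcases lt_or_ge j p with hjp | hpj
    · linarith [prefixMin_le (S := S) (show j ≤ b by omega)]
    · obtain ⟨i, rfl⟩ := Nat.exists_eq_add_of_le' hpj
      rw [hper]
      linarith [prefixMin_le (S := S) (show i ≤ b by omega)]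

/-- Stepping back by a period only raises the walk, so beating the full period
before `s + p` beats everything before it. -/
lemma isStrictRecord_add_period_iff (hp : 0 < p) (hper : ∀ t, S (t + p) = S t - d) (hd : 0 ≤ d)
    (s : ℕ) : IsStrictRecord S (s + p) ↔ ∀ i < p, S (s + p) < S (s + i) := by
  refine ⟨fun h i hi => h (s + i) (by omega), fun h => ?_⟩
  intro j hj
  induction hgap : s - j using Nat.strong_induction_on generalizing j with
  | _ g ih =>
    by_cases hsj : s ≤ j
    · simpa [Nat.add_sub_cancel' hsj] using h (j - s) (by omega)
    · have := ih (s - (j + p)) (by omega) (j + p) (by omega) rfl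
      linarith [hper j]

end StrictRecord

lemma isPF_iff_of_one_le {m n : ℕ} {f : Fin m → ℕ} (hf : ∀ k, 1 ≤ f k) :
    IsPF m n f ↔ ∀ i ≤ n, m + i ≤ #{k | f k ≤ i} + n := by
  refine ⟨And.right, fun h => ⟨fun k => ⟨hf k, ?_⟩, h⟩⟩
  have hall : #{k | f k ≤ n} = #(univ : Finset (Fin m)) :=
    le_antisymm (card_filter_le _ _) (by simpa using h n le_rfl)
  exact card_filter_eq_iff.mp hall k (mem_univ k)

lemma ncard_setOf_neg_val_add_eq_card_filter_Ioc {n : ℕ} (P : ℕ → Prop) [DecidablePred P] :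
    {k : Fin (n + 1) | P (((-k : Fin (n + 1)) : ℕ) + (n + 1))}.ncard =
      #((Ioc n (n + (n + 1))).filter P) := by
  rw [← Set.ncard_coe_finset]
  refine Set.ncard_congr (fun k _ => ((-k : Fin (n + 1)) : ℕ) + (n + 1)) ?_ ?_ ?_
  · intro k hk
    simp only [coe_filter, mem_Ioc, Set.mem_ofPred_eq] at hk ⊢
    exact ⟨by omega, hk⟩
  · intro a b _ _ h
    simpa [Fin.val_inj] using h
  · intro t ht
    simp only [coe_filter, mem_Ioc, Set.mem_ofPred_eq] at ht
    have hval : (((t - (n + 1) : ℕ) : Fin (n + 1)) : ℕ) = t - (n + 1) :=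
      Fin.val_cast_of_lt (by omega)
    have hsub : t - (n + 1) + (n + 1) = t := by omega
    refine ⟨-((t - (n + 1) : ℕ) : Fin (n + 1)), ?_, ?_⟩ <;>
      simp only [Set.mem_ofPred_eq, neg_neg, hval, hsub]
    exact ht.2

section Walk

variable {m n : ℕ} (π : Fin m → Fin (n + 1))

def preferenceCount (t : ℕ) : ℕ := #{l | π l = (t : Fin (n + 1))}

def parkingWalk (t : ℕ) : ℤ := ∑ j ∈ range t, (preferenceCount π j : ℤ) - t

lemma parkingWalk_add (s i : ℕ) :
    parkingWalk π (s + i) =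
      parkingWalk π s + ∑ j ∈ range i, (preferenceCount π (s + j) : ℤ) - i := by
  simp only [parkingWalk, sum_range_add]
  push_cast
  ring

lemma parkingWalk_succ (t : ℕ) :
    parkingWalk π (t + 1) = parkingWalk π t + preferenceCount π t - 1 := by
  simpa using parkingWalk_add π t 1

lemma sub_one_le_parkingWalk_succ (t : ℕ) : parkingWalk π t - 1 ≤ parkingWalk π (t + 1) := by
  linarith [parkingWalk_succ π t, (preferenceCount π t).cast_nonneg (α := ℤ)]

lemma card_filter_val_add_lt (k : Fin (n + 1)) {i : ℕ} (hi : i ≤ n + 1) :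
    #{l | ((π l + k : Fin (n + 1)) : ℕ) < i} =
      ∑ j ∈ range i, preferenceCount π (((-k : Fin (n + 1)) : ℕ) + j) := by
  rw [card_eq_sum_card_fiberwise (f := fun l => ((π l + k : Fin (n + 1)) : ℕ)) (t := range i)
    (fun l hl => by simpa using hl)]
  refine sum_congr rfl fun j hj => ?_
  have hji : j < i := mem_range.mp hj
  unfold preferenceCount
  congr 1
  ext l
  simp only [mem_filter, mem_univ, true_and, Nat.cast_add, Fin.cast_val_eq_self]
  rw [eq_neg_add_iff_add_eq, add_comm k, Fin.ext_iff, Fin.val_cast_of_lt (by omega)]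
  exact ⟨And.right, fun h => ⟨h ▸ hji, h⟩⟩

lemma sum_range_preferenceCount : ∑ j ∈ range (n + 1), preferenceCount π j = m := by
  simpa [Fin.is_le] using (card_filter_val_add_lt π 0 le_rfl).symm

lemma preferenceCount_add_period (t : ℕ) :
    preferenceCount π (t + (n + 1)) = preferenceCount π t := by
  simp [preferenceCount]

lemma parkingWalk_add_period (hmn : m ≤ n) (t : ℕ) :
    parkingWalk π (t + (n + 1)) = parkingWalk π t - (n - m + 1 : ℕ) := by
  induction t with
  | zero =>
    simp only [parkingWalk, zero_add, ← Nat.cast_sum, sum_range_preferenceCount, range_zero,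
      sum_empty]
    omega
  | succ t ih =>
    rw [add_right_comm, parkingWalk_succ, ih, preferenceCount_add_period, parkingWalk_succ]
    ring

lemma isPF_add_iff (hmn : m ≤ n) (k : Fin (n + 1)) :
    IsPF m n (fun i => ((π i + k : Fin (n + 1)) : ℕ) + 1) ↔
      IsStrictRecord (parkingWalk π) (((-k : Fin (n + 1)) : ℕ) + (n + 1)) := by
  rw [isPF_iff_of_one_le (fun _ => Nat.le_add_left 1 _),
    isStrictRecord_add_period_iff (by positivity) (parkingWalk_add_period π hmn) (by positivity)]
  simp_rw [Nat.add_one_le_iff, Nat.lt_add_one_iff]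
  refine forall₂_congr fun i hi => ?_
  rw [card_filter_val_add_lt π k (by omega), parkingWalk_add_period π hmn, parkingWalk_add,
    ← Nat.cast_sum]
  omega

end Walk

/-- Pollak's circle argument: for every `π ∈ [n+1]^m` (encoded with values in
`Fin (n+1)`, where the value of car `i` is `(π i : ℕ) + 1 ∈ {1,…,n+1}`), exactly
`n-m+1` of the `n+1` translates `π + k·(1,…,1) (mod n+1)` are parking functions
in `PF(m,n)`. -/
theorem pollak_coset (m n : ℕ) (hmn : m ≤ n) (π : Fin m → Fin (n + 1)) :
    {k : Fin (n + 1) | IsPF m n (fun i => ((π i + k : Fin (n + 1)) : ℕ) + 1)}.ncard =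
      n - m + 1 := by
  classical
  have hrecords :=
    card_filter_isStrictRecord_Ioc (sub_one_le_parkingWalk_succ π) (Nat.le_add_right n (n + 1))
  rw [prefixMin_add_period (parkingWalk_add_period π hmn) (by positivity) le_rfl, sub_sub_cancel,
    Nat.cast_inj] at hrecords
  simp_rw [isPF_add_iff π hmn]
  rw [ncard_setOf_neg_val_add_eq_card_filter_Ioc, hrecords]
end
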